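/- arXiv:2305.05418 — 3 statements merged into one kernel-verified Lean document; each statement's English description precedes it below -/
import Mathlib

section
/- Evaluating a past-time LTLf formula on a finite trace coincides with evaluating its future-time mirror on the reversed trace: for a finite trace t of length n and any instant i with 1 ≤ i ≤ n, (t, i) satisfies φ₁ S φ₂ (since) if and only if (reverse(t), n+1-i) satisfies φ₁ U φ₂ (until), where reverse(t) is the trace t read from end to start. -/
inductive LTLf (σ : Type) where
  | tt : LTLf σ
  | ff : LTLf σ
  | atom : (σ → Prop) → LTLf σ
  | not : LTLf σ → LTLf σ
  | and : LTLf σ → LTLf σ → LTLf σ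
  | or : LTLf σ → LTLf σ → LTLf σ
  | next : LTLf σ → LTLf σ
  | yesterday : LTLf σ → LTLf σ
  | until_ : LTLf σ → LTLf σ → LTLf σ
  | since : LTLf σ → LTLf σ → LTLf σ

def Sat {σ : Type} (t : ℕ → σ) (n : ℕ) : ℕ → LTLf σ → Prop
  | _, .tt => True
  | _, .ff => False
  | i, .atom p => p (t i)
  | i, .not φ => ¬ Sat t n i φ
  | i, .and φ ψ => Sat t n i φ ∧ Sat t n i ψ
  | i, .or φ ψ => Sat t n i φ ∨ Sat t n i ψ
  | i, .next φ => i < n ∧ Sat t n (i+1) φ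
  | i, .yesterday φ => 1 < i ∧ Sat t n (i-1) φ
  | i, .until_ φ ψ => ∃ j, i ≤ j ∧ j ≤ n ∧ Sat t n j ψ ∧ ∀ k, i ≤ k → k < j → Sat t n k φ
  | i, .since φ ψ => ∃ j, 1 ≤ j ∧ j ≤ i ∧ Sat t n j ψ ∧ ∀ k, j < k → k ≤ i → Sat t n k φ

/-- Since on a trace coincides with Until on the reversed trace. -/
theorem since_iff_until_reverse {σ : Type} (t : ℕ → σ) (n : ℕ)
    (φ₁ φ₂ : LTLf σ) (i : ℕ) (h1 : 1 ≤ i) (h2 : i ≤ n)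
    (hmirror : ∀ k, 1 ≤ k → k ≤ n →
      ((Sat t n k φ₁ ↔ Sat (fun j => t (n + 1 - j)) n (n + 1 - k) φ₁) ∧
       (Sat t n k φ₂ ↔ Sat (fun j => t (n + 1 - j)) n (n + 1 - k) φ₂))) :
    Sat t n i (.since φ₁ φ₂) ↔
      Sat (fun j => t (n + 1 - j)) n (n + 1 - i) (.until_ φ₁ φ₂) := by
  simp only [Sat]
  constructor
  · rintro ⟨j, hj1, hji, hψ, hφ⟩
    refine ⟨n + 1 - j, by omega, by omega, ?_, ?_⟩
    · have := ((hmirror j hj1 (le_trans hji h2)).2).mp hψ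
      exact this
    · intro k hk1 hk2
      have hk : 1 ≤ n + 1 - k := by omega
      have hkn : n + 1 - k ≤ n := by omega
      have := (hmirror (n + 1 - k) hk hkn).1.mp (hφ (n + 1 - k) (by omega) (by omega))
      have heq : n + 1 - (n + 1 - k) = k := by omega
      rwa [heq] at this
  · rintro ⟨j, hj1, hjn, hψ, hφ⟩
    refine ⟨n + 1 - j, by omega, by omega, ?_, ?_⟩
    · have h := ((hmirror (n + 1 - j) (by omega) (by omega)).2)
      have heq : n + 1 - (n + 1 - j) = j := by omega
      rw [heq] at h
      exact h.mpr hψ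
    · intro k hk1 hk2
      have h := (hmirror k (by omega) (by omega)).1
      exact h.mpr (hφ (n + 1 - k) (by omega) (by omega))
end

section
/- The 'yesterday' operator is the mirror of 'next' under trace reversal: for a finite trace t of length n, an instant i with 1 ≤ i ≤ n, and a formula φ whose evaluation commutes with reversal (i.e., (t,k) ⊨ φ iff (reverse(t), n+1-k) ⊨ φ for all k), we have (t, i) ⊨ ⊖φ if and only if (reverse(t), n+1-i) ⊨ ◯φ. -/
/-- Yesterday on a trace coincides with Next on the reversed trace. -/
theorem yesterday_iff_next_reverse {σ : Type} (t : ℕ → σ) (n : ℕ)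
    (φ : LTLf σ) (i : ℕ) (h1 : 1 ≤ i) (h2 : i ≤ n)
    (hmirror : ∀ k, 1 ≤ k → k ≤ n →
      (Sat t n k φ ↔ Sat (fun j => t (n + 1 - j)) n (n + 1 - k) φ)) :
    Sat t n i (.yesterday φ) ↔
      Sat (fun j => t (n + 1 - j)) n (n + 1 - i) (.next φ) := by
  simp only [Sat]
  constructor
  · rintro ⟨hi, hs⟩
    refine ⟨by omega, ?_⟩
    have := (hmirror (i-1) (by omega) (by omega)).mp hs
    have he : n + 1 - (i - 1) = n + 1 - i + 1 := by omega
    rwa [he] at this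
  · rintro ⟨hi, hs⟩
    have hi2 : 1 < i := by omega
    refine ⟨hi2, ?_⟩
    have he : n + 1 - (i - 1) = n + 1 - i + 1 := by omega
    exact (hmirror (i-1) (by omega) (by omega)).mpr (by rwa [he])
end

section
/- The conditional (Confidence) estimator for a specification can be strictly smaller than the minimum over its constituent rules: there exists a trace t with binary labelings for activators and targets of two RCons Ψ₁ and Ψ₂ such that the per-rule conditional estimators P̂(φ_{τ₁}(t)|φ_{α₁}(t)) and P̂(φ_{τ₂}(t)|φ_{α₂}(t)) are both well-defined, and the specification estimator P̂(𝒮_τ(t)|𝒮_α(t)) for 𝒮={Ψ₁,Ψ₂} is strictly smaller than the minimum of the two per-rule estimators. -/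
open Finset

/-- There is a trace with binary labelings of the activators and targets of two
    RCons for which the specification's conditional (Confidence) estimator is
    strictly smaller than the minimum of the two per-rule estimators. -/
theorem spec_confidence_lt_min_rules :
    ∃ (n : ℕ) (_ : 1 ≤ n) (a₁ τ₁ a₂ τ₂ : Fin n → ℝ),
      (∀ i, a₁ i = 0 ∨ a₁ i = 1) ∧ (∀ i, τ₁ i = 0 ∨ τ₁ i = 1) ∧
      (∀ i, a₂ i = 0 ∨ a₂ i = 1) ∧ (∀ i, τ₂ i = 0 ∨ τ₂ i = 1) ∧
      0 < (∑ i, a₁ i) ∧ 0 < (∑ i, a₂ i) ∧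
      0 < (∑ i, max (a₁ i) (a₂ i)) ∧
      (∑ i, min (1 - a₁ i * (1 - τ₁ i)) (1 - a₂ i * (1 - τ₂ i)) * max (a₁ i) (a₂ i)) /
          (∑ i, max (a₁ i) (a₂ i)) <
        min ((∑ i, τ₁ i * a₁ i) / (∑ i, a₁ i)) ((∑ i, τ₂ i * a₂ i) / (∑ i, a₂ i)) := by
  refine ⟨2, by norm_num, fun _ => 1, ![1, 0], fun _ => 1, ![0, 1],
    fun i => Or.inr rfl, ?_, fun i => Or.inr rfl, ?_, ?_, ?_, ?_, ?_⟩
  · intro i; fin_cases i <;> simp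
  · intro i; fin_cases i <;> simp
  · simp [Fin.sum_univ_two]
  · simp [Fin.sum_univ_two]
  · simp [Fin.sum_univ_two]
  · norm_num [Fin.sum_univ_two]
end
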